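/- arXiv:2307.12511 — 8 statements merged into one kernel-verified Lean document; each statement's English description precedes it below -/
import Mathlib

section
/- Let X ⊆ ℝⁿ be nonempty, closed, and convex, F : X → ℝⁿ continuous and monotone with nonempty solution set SOL(X,F), and let f : ℝⁿ → ℝ be continuously differentiable and μ-strongly convex with μ > 0. Let x* be the unique minimizer of f over SOL(X,F). Then for every x ∈ X, (μ/2)‖x − x*‖² ≤ f(x) − f(x*) + ‖∇f(x*)‖ · dist(x, SOL(X,F)). -/
local notation "⟪" x ", " y "⟫_ℝ" => @inner ℝ _ _ x y

open Metric Set Filter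

theorem stmt2 {n : ℕ}
    (X : Set (EuclideanSpace ℝ (Fin n)))
    (F : EuclideanSpace ℝ (Fin n) → EuclideanSpace ℝ (Fin n))
    (hXne : X.Nonempty) (hXcl : IsClosed X) (hXconv : Convex ℝ X)
    (hFcont : ContinuousOn F X)
    (hFmono : ∀ u ∈ X, ∀ v ∈ X, 0 ≤ ⟪F u - F v, u - v⟫_ℝ)
    (S : Set (EuclideanSpace ℝ (Fin n)))
    (hS : S = {z ∈ X | ∀ y ∈ X, 0 ≤ ⟪F z, y - z⟫_ℝ})
    (hSne : S.Nonempty)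
    (f : EuclideanSpace ℝ (Fin n) → ℝ)
    (f' : EuclideanSpace ℝ (Fin n) → EuclideanSpace ℝ (Fin n))
    (hgrad : ∀ z, HasGradientAt f (f' z) z)
    (hf'cont : Continuous f')
    (μ : ℝ) (hμ : 0 < μ)
    (hsconv : ∀ u v, f v + ⟪f' v, u - v⟫_ℝ + μ/2 * ‖u - v‖^2 ≤ f u)
    (xstar : EuclideanSpace ℝ (Fin n))
    (hxstar : xstar ∈ S ∧ ∀ z ∈ S, f xstar ≤ f z) :
    ∀ x ∈ X, μ/2 * ‖x - xstar‖^2 ≤ f x - f xstar + ‖f' xstar‖ * infDist x S := by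
  -- the sequence t k = 1/(k+1)
  set t : ℕ → ℝ := fun k => 1 / ((k : ℝ) + 1) with ht
  have htpos : ∀ k, 0 < t k := fun k => by positivity
  have ht1 : ∀ k, t k ≤ 1 := by
    intro k
    rw [div_le_one (by positivity)]
    linarith [Nat.cast_nonneg (α := ℝ) k]
  have htlim : Tendsto t atTop (nhds 0) :=
    tendsto_one_div_add_atTop_nhds_zero_nat
  -- Minty characterization of S
  have hMinty : ∀ z, z ∈ S ↔ z ∈ X ∧ ∀ y ∈ X, 0 ≤ ⟪F y, y - z⟫_ℝ := by
    intro z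
    constructor
    · rintro hz
      rw [hS] at hz
      obtain ⟨hzX, hz⟩ := hz
      refine ⟨hzX, fun y hy => ?_⟩
      have h1 := hFmono y hy z hzX
      have h2 := hz y hy
      rw [inner_sub_left] at h1
      linarith
    · rintro ⟨hzX, hz⟩
      rw [hS]
      refine ⟨hzX, fun y hy => ?_⟩
      set w : ℕ → EuclideanSpace ℝ (Fin n) := fun k => z + t k • (y - z) with hw
      have hwX : ∀ k, w k ∈ X := by
        intro k
        have := hXconv hzX hy (a := 1 - t k) (b := t k) (by linarith [ht1 k])
          (le_of_lt (htpos k)) (by ring)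
        convert this using 1
        simp only [hw]
        module
      have hwlim : Tendsto w atTop (nhds z) := by
        have : Tendsto (fun k => z + t k • (y - z)) atTop (nhds (z + (0:ℝ) • (y - z))) :=
          tendsto_const_nhds.add (htlim.smul_const _)
        simpa using this
      have hFlim : Tendsto (fun k => F (w k)) atTop (nhds (F z)) := by
        refine (hFcont z hzX).tendsto.comp ?_
        exact tendsto_nhdsWithin_iff.mpr ⟨hwlim, Eventually.of_forall hwX⟩
      have hglim : Tendsto (fun k => ⟪F (w k), y - z⟫_ℝ) atTop (nhds ⟪F z, y - z⟫_ℝ) :=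
        hFlim.inner tendsto_const_nhds
      refine ge_of_tendsto' hglim (fun k => ?_)
      have h0 := hz (w k) (hwX k)
      have : w k - z = t k • (y - z) := by simp [hw]
      rw [this, real_inner_smul_right] at h0
      exact nonneg_of_mul_nonneg_right h0 (htpos k)
  -- S is convex
  have hSconv : Convex ℝ S := by
    intro z1 h1 z2 h2 a b ha hb hab
    rw [hMinty] at h1 h2 ⊢
    refine ⟨hXconv h1.1 h2.1 ha hb hab, fun y hy => ?_⟩
    have e : y - (a • z1 + b • z2) = a • (y - z1) + b • (y - z2) := by
      have h1 : a • y + b • y = y := by rw [← add_smul, hab, one_smul]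
      rw [smul_sub, smul_sub]; nth_rewrite 1 [← h1]; abel
    rw [e, inner_add_right, real_inner_smul_right, real_inner_smul_right]
    have := h1.2 y hy
    have := h2.2 y hy
    positivity
  -- S is closed
  have hScl : IsClosed S := by
    have : S = X ∩ ⋂ y ∈ X, {z | 0 ≤ ⟪F y, y - z⟫_ℝ} := by
      ext z
      simp only [mem_inter_iff, mem_iInter, mem_setOf_eq, hMinty z]
    rw [this]
    refine hXcl.inter (isClosed_biInter fun y hy => ?_)
    exact isClosed_le continuous_const
      (Continuous.inner continuous_const (continuous_const.sub continuous_id))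
  -- first-order optimality of xstar over S
  have hopt : ∀ s ∈ S, 0 ≤ ⟪f' xstar, s - xstar⟫_ℝ := by
    intro s hs
    set w : ℕ → EuclideanSpace ℝ (Fin n) := fun k => xstar + t k • (s - xstar) with hw
    have hwS : ∀ k, w k ∈ S := by
      intro k
      have := hSconv hxstar.1 hs (a := 1 - t k) (b := t k) (by linarith [ht1 k])
        (le_of_lt (htpos k)) (by ring)
      convert this using 1
      simp only [hw]
      module
    have hwlim : Tendsto w atTop (nhds xstar) := by
      have : Tendsto (fun k => xstar + t k • (s - xstar)) atTop
          (nhds (xstar + (0:ℝ) • (s - xstar))) :=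
        tendsto_const_nhds.add (htlim.smul_const _)
      simpa using this
    have hglim : Tendsto (fun k => ⟪f' (w k), s - xstar⟫_ℝ) atTop
        (nhds ⟪f' xstar, s - xstar⟫_ℝ) :=
      ((hf'cont.tendsto xstar).comp hwlim).inner tendsto_const_nhds
    refine ge_of_tendsto' hglim (fun k => ?_)
    have hfle : f xstar ≤ f (w k) := hxstar.2 _ (hwS k)
    have hsc := hsconv xstar (w k)
    have hsq : 0 ≤ μ/2 * ‖xstar - w k‖^2 := by positivity
    have hin : ⟪f' (w k), xstar - w k⟫_ℝ ≤ 0 := by linarith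
    have e : xstar - w k = (- t k) • (s - xstar) := by simp [hw]
    rw [e, real_inner_smul_right] at hin
    nlinarith [htpos k]
  -- main proof
  intro x hx
  obtain ⟨s, hsS, hds⟩ := hScl.exists_infDist_eq_dist hSne x
  have hsc := hsconv x xstar
  have key : -⟪f' xstar, x - xstar⟫_ℝ ≤ ‖f' xstar‖ * infDist x S := by
    have e : x - xstar = (x - s) + (s - xstar) := by abel
    have h1 : -⟪f' xstar, x - s⟫_ℝ ≤ ‖f' xstar‖ * ‖x - s‖ := by
      have := abs_real_inner_le_norm (f' xstar) (x - s)
      have := neg_abs_le ⟪f' xstar, x - s⟫_ℝ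
      linarith
    have h2 := hopt s hsS
    rw [e, inner_add_right]
    rw [hds, dist_eq_norm]
    linarith
  linarith
end

section
/- Let X ⊆ ℝⁿ be nonempty, closed, and convex and F : X → ℝⁿ continuous. Suppose VI(X,F) is α-weakly sharp of order M ≥ 1 and SOL(X,F) is nonempty. Then for every x ∈ X, dist(x, SOL(X,F)) ≤ (α⁻¹ · Gap(x, X, F))^{1/M}, where Gap(x,X,F) = sup_{y ∈ X} F(y)ᵀ(x − y). -/
local notation "⟪" x ", " y "⟫_ℝ" => @inner ℝ _ _ x y

open Metric Set

theorem stmt3 {n : ℕ}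
    (X : Set (EuclideanSpace ℝ (Fin n)))
    (F : EuclideanSpace ℝ (Fin n) → EuclideanSpace ℝ (Fin n))
    (hXne : X.Nonempty) (hXcl : IsClosed X) (hXconv : Convex ℝ X)
    (hFcont : ContinuousOn F X)
    (S : Set (EuclideanSpace ℝ (Fin n)))
    (hS : S = {z ∈ X | ∀ y ∈ X, 0 ≤ ⟪F z, y - z⟫_ℝ})
    (hSne : S.Nonempty)
    (α M : ℝ) (hα : 0 < α) (hM : 1 ≤ M)
    (hws : ∀ x ∈ X, ∀ xs ∈ S, α * infDist x S ^ M ≤ ⟪F xs, x - xs⟫_ℝ) :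
    ∀ x ∈ X, BddAbove ((fun y => ⟪F y, x - y⟫_ℝ) '' X) →
      infDist x S ≤ (α⁻¹ * sSup ((fun y => ⟪F y, x - y⟫_ℝ) '' X)) ^ (1/M) := by
  intro x hx hbdd
  obtain ⟨xs, hxs⟩ := hSne
  have hxsX : xs ∈ X := by rw [hS] at hxs; exact hxs.1
  have h1 : α * infDist x S ^ M ≤ ⟪F xs, x - xs⟫_ℝ := hws x hx xs hxs
  have h2 : ⟪F xs, x - xs⟫_ℝ ≤ sSup ((fun y => ⟪F y, x - y⟫_ℝ) '' X) :=
    le_csSup hbdd ⟨xs, hxsX, rfl⟩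
  have hd : (0:ℝ) ≤ infDist x S := infDist_nonneg
  have hMpos : (0:ℝ) < M := lt_of_lt_of_le one_pos hM
  have h3 : infDist x S ^ M ≤ α⁻¹ * sSup ((fun y => ⟪F y, x - y⟫_ℝ) '' X) := by
    rw [← le_div_iff₀' hα] at h1
    calc infDist x S ^ M ≤ ⟪F xs, x - xs⟫_ℝ / α := h1
    _ ≤ sSup ((fun y => ⟪F y, x - y⟫_ℝ) '' X) / α := by
        exact div_le_div_of_nonneg_right h2 hα.le
    _ = α⁻¹ * sSup ((fun y => ⟪F y, x - y⟫_ℝ) '' X) := by ring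
  have hpow : (0:ℝ) ≤ infDist x S ^ M := Real.rpow_nonneg hd M
  calc infDist x S = (infDist x S ^ M) ^ (1/M) := by
        rw [← Real.rpow_mul hd, mul_one_div, div_self hMpos.ne', Real.rpow_one]
  _ ≤ (α⁻¹ * sSup ((fun y => ⟪F y, x - y⟫_ℝ) '' X)) ^ (1/M) :=
    Real.rpow_le_rpow hpow h3 (by positivity)
end

section
/- Let X ⊆ ℝⁿ be closed and convex, F : X → ℝⁿ be L_F-Lipschitz and monotone, H : X → ℝⁿ be L_H-Lipschitz and monotone, γ > 0, η_k > 0. Given x_k ∈ X, define y_{k+1} := Π_X[x_k − γ(F(x_k) + η_k H(x_k))] and x_{k+1} := Π_X[x_k − γ(F(y_{k+1}) + η_k H(y_{k+1}))]. Then for every x ∈ X: ‖x_{k+1} − x‖² ≤ ‖x_k − x‖² − ‖y_{k+1} − x_k‖² + 2γ²(L_F² + η_k² L_H²)‖y_{k+1} − x_k‖² + 2γ(F(y_{k+1}) + η_k H(y_{k+1}))ᵀ(x − y_{k+1}). -/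
local notation "⟪" x ", " y "⟫_ℝ" => @inner ℝ _ _ x y

open Metric Set

theorem stmt6 {n : ℕ}
    (X : Set (EuclideanSpace ℝ (Fin n))) (hXcl : IsClosed X) (hXconv : Convex ℝ X)
    (F H : EuclideanSpace ℝ (Fin n) → EuclideanSpace ℝ (Fin n))
    (LF LH γ η : ℝ)
    (hLF : ∀ u ∈ X, ∀ v ∈ X, ‖F u - F v‖ ≤ LF * ‖u - v‖)
    (hFmono : ∀ u ∈ X, ∀ v ∈ X, 0 ≤ ⟪F u - F v, u - v⟫_ℝ)
    (hLH : ∀ u ∈ X, ∀ v ∈ X, ‖H u - H v‖ ≤ LH * ‖u - v‖)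
    (hHmono : ∀ u ∈ X, ∀ v ∈ X, 0 ≤ ⟪H u - H v, u - v⟫_ℝ)
    (hγ : 0 < γ) (hη : 0 < η)
    (xk y1 x1 : EuclideanSpace ℝ (Fin n)) (hxk : xk ∈ X)
    (hy1 : y1 ∈ X)
    (hy1proj : ∀ z ∈ X, ⟪z - y1, (xk - γ • (F xk + η • H xk)) - y1⟫_ℝ ≤ 0)
    (hx1 : x1 ∈ X)
    (hx1proj : ∀ z ∈ X, ⟪z - x1, (xk - γ • (F y1 + η • H y1)) - x1⟫_ℝ ≤ 0) :
    ∀ x ∈ X, ‖x1 - x‖^2 ≤ ‖xk - x‖^2 - ‖y1 - xk‖^2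
        + 2*γ^2*(LF^2 + η^2*LH^2) * ‖y1 - xk‖^2
        + 2*γ*⟪F y1 + η • H y1, x - y1⟫_ℝ := by
  intro x hx
  have h1 := hx1proj x hx
  have h2 := hy1proj x1 hx1
  set d := γ • (F y1 + η • H y1) with hd
  set e := γ • (F xk + η • H xk) with he
  -- E1 : three-point expansion of ‖x1 - x‖²
  have E1 : ‖x1 - x‖^2 = ‖x1 - xk‖^2 + 2*⟪x1 - xk, xk - x⟫_ℝ + ‖xk - x‖^2 := by
    rw [show x1 - x = (x1 - xk) + (xk - x) from by abel, norm_add_sq_real]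
  have E1b : ⟪x1 - xk, x1 - x⟫_ℝ = ‖x1 - xk‖^2 + ⟪x1 - xk, xk - x⟫_ℝ := by
    rw [show x1 - x = (x1 - xk) + (xk - x) from by abel, inner_add_right,
      real_inner_self_eq_norm_sq]
  -- E2 : projection inequality for x1
  have E2 : ⟪x1 - xk, x1 - x⟫_ℝ ≤ ⟪d, x - x1⟫_ℝ := by
    have hA : ⟪x - x1, (xk - d) - x1⟫_ℝ
        = ⟪x - x1, xk - x1⟫_ℝ - ⟪x - x1, d⟫_ℝ := by
      rw [show (xk - d) - x1 = (xk - x1) - d from by abel, inner_sub_right]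
    have hB : ⟪x1 - xk, x1 - x⟫_ℝ = ⟪x - x1, xk - x1⟫_ℝ := by
      rw [show x1 - xk = -(xk - x1) from by abel, show x1 - x = -(x - x1) from by abel,
        inner_neg_neg, real_inner_comm]
    have hC : ⟪d, x - x1⟫_ℝ = ⟪x - x1, d⟫_ℝ := real_inner_comm _ _
    rw [hA] at h1
    linarith
  -- E3 : split the displacement
  have E3 : ⟪d, x - x1⟫_ℝ = ⟪d, x - y1⟫_ℝ + ⟪d - e, y1 - x1⟫_ℝ + ⟪e, y1 - x1⟫_ℝ := by
    rw [inner_sub_left, show x - x1 = (x - y1) + (y1 - x1) from by abel, inner_add_right]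
    ring
  -- E4 : projection inequality for y1
  have E4 : ⟪e, y1 - x1⟫_ℝ ≤ ⟪x1 - y1, y1 - xk⟫_ℝ := by
    have hA : ⟪x1 - y1, (xk - e) - y1⟫_ℝ
        = ⟪x1 - y1, xk - y1⟫_ℝ - ⟪x1 - y1, e⟫_ℝ := by
      rw [show (xk - e) - y1 = (xk - y1) - e from by abel, inner_sub_right]
    have hB : ⟪e, y1 - x1⟫_ℝ = -⟪x1 - y1, e⟫_ℝ := by
      rw [real_inner_comm, show y1 - x1 = -(x1 - y1) from by abel, inner_neg_left]
    have hC : ⟪x1 - y1, y1 - xk⟫_ℝ = -⟪x1 - y1, xk - y1⟫_ℝ := by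
      rw [show y1 - xk = -(xk - y1) from by abel, inner_neg_right]
    rw [hA] at h2
    linarith
  -- E5 : three-point expansion of ‖x1 - xk‖²
  have E5 : ‖x1 - xk‖^2 = ‖x1 - y1‖^2 + 2*⟪x1 - y1, y1 - xk⟫_ℝ + ‖y1 - xk‖^2 := by
    rw [show x1 - xk = (x1 - y1) + (y1 - xk) from by abel, norm_add_sq_real]
  -- E6 : Cauchy-Schwarz + AM-GM
  have E6 : 2*⟪d - e, y1 - x1⟫_ℝ ≤ ‖d - e‖^2 + ‖y1 - x1‖^2 := by
    have hcs := real_inner_le_norm (d - e) (y1 - x1)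
    nlinarith [sq_nonneg (‖d - e‖ - ‖y1 - x1‖)]
  have E7 : ‖y1 - x1‖^2 = ‖x1 - y1‖^2 := by rw [norm_sub_rev]
  -- E8 : Lipschitz bound on ‖d - e‖²
  have E8 : ‖d - e‖^2 ≤ 2*γ^2*(LF^2 + η^2*LH^2) * ‖y1 - xk‖^2 := by
    have hdiff : d - e = γ • ((F y1 - F xk) + η • (H y1 - H xk)) := by
      rw [hd, he]; module
    have hF' := hLF y1 hy1 xk hxk
    have hH' := hLH y1 hy1 xk hxk
    have hbound : ‖d - e‖ ≤ γ * (LF * ‖y1 - xk‖ + η * (LH * ‖y1 - xk‖)) := by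
      rw [hdiff, norm_smul, Real.norm_eq_abs, abs_of_pos hγ]
      apply mul_le_mul_of_nonneg_left _ hγ.le
      calc ‖(F y1 - F xk) + η • (H y1 - H xk)‖
          ≤ ‖F y1 - F xk‖ + ‖η • (H y1 - H xk)‖ := norm_add_le _ _
        _ = ‖F y1 - F xk‖ + η * ‖H y1 - H xk‖ := by
            rw [norm_smul, Real.norm_eq_abs, abs_of_pos hη]
        _ ≤ LF * ‖y1 - xk‖ + η * (LH * ‖y1 - xk‖) := by
            exact add_le_add hF' (mul_le_mul_of_nonneg_left hH' hη.le)
    have hsq := mul_self_le_mul_self (norm_nonneg (d - e)) hbound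
    nlinarith [sq_nonneg (γ * (LF * ‖y1 - xk‖ - η * (LH * ‖y1 - xk‖)))]
  -- E9 : pull out γ
  have E9 : ⟪d, x - y1⟫_ℝ = γ * ⟪F y1 + η • H y1, x - y1⟫_ℝ := by
    rw [hd, real_inner_smul_left]
  linarith
end

section
/- Under the setting of the regularized extragradient step (X closed convex, F L_F-Lipschitz monotone, H L_H-Lipschitz monotone, γ > 0, η_k > 0, y_{k+1} = Π_X[x_k − γ(F(x_k) + η_k H(x_k))], x_{k+1} = Π_X[x_k − γ(F(y_{k+1}) + η_k H(y_{k+1}))]), if γ²(L_F² + η_k² L_H²) ≤ 1/2 then for every x ∈ X: 2γ(F(x) + η_k H(x))ᵀ(y_{k+1} − x) ≤ ‖x_k − x‖² − ‖x_{k+1} − x‖². -/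
local notation "⟪" x ", " y "⟫_ℝ" => @inner ℝ _ _ x y

open Metric Set

set_option maxHeartbeats 1600000 in
theorem stmt7 {n : ℕ}
    (X : Set (EuclideanSpace ℝ (Fin n))) (hXcl : IsClosed X) (hXconv : Convex ℝ X)
    (F H : EuclideanSpace ℝ (Fin n) → EuclideanSpace ℝ (Fin n))
    (LF LH γ η : ℝ)
    (hLF : ∀ u ∈ X, ∀ v ∈ X, ‖F u - F v‖ ≤ LF * ‖u - v‖)
    (hFmono : ∀ u ∈ X, ∀ v ∈ X, 0 ≤ ⟪F u - F v, u - v⟫_ℝ)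
    (hLH : ∀ u ∈ X, ∀ v ∈ X, ‖H u - H v‖ ≤ LH * ‖u - v‖)
    (hHmono : ∀ u ∈ X, ∀ v ∈ X, 0 ≤ ⟪H u - H v, u - v⟫_ℝ)
    (hγ : 0 < γ) (hη : 0 < η)
    (hstep : γ^2 * (LF^2 + η^2*LH^2) ≤ 1/2)
    (xk y1 x1 : EuclideanSpace ℝ (Fin n)) (hxk : xk ∈ X)
    (hy1 : y1 ∈ X)
    (hy1proj : ∀ z ∈ X, ⟪z - y1, (xk - γ • (F xk + η • H xk)) - y1⟫_ℝ ≤ 0)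
    (hx1 : x1 ∈ X)
    (hx1proj : ∀ z ∈ X, ⟪z - x1, (xk - γ • (F y1 + η • H y1)) - x1⟫_ℝ ≤ 0) :
    ∀ x ∈ X, 2*γ*⟪F x + η • H x, y1 - x⟫_ℝ ≤ ‖xk - x‖^2 - ‖x1 - x‖^2 := by
  intro x hx
  -- abbreviations for the regularized operator values
  set Gx : EuclideanSpace ℝ (Fin n) := F x + η • H x with hGx
  set Gy : EuclideanSpace ℝ (Fin n) := F y1 + η • H y1 with hGy
  set Gk : EuclideanSpace ℝ (Fin n) := F xk + η • H xk with hGk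
  -- canonical scalar atoms
  -- A = ⟪Gy, x - y1⟫, B = ⟪Gy, y1 - x1⟫, C = ⟪Gk, y1 - x1⟫, D = ⟪Gx, y1 - x⟫
  -- m1 = ⟪xk - x1, x1 - x⟫, m2 = ⟪xk - y1, y1 - x1⟫
  -- Projection inequality for x1
  have h1 := hx1proj x hx
  rw [show (xk - γ • Gy) - x1 = (xk - x1) - γ • Gy by abel, inner_sub_right,
      real_inner_smul_right] at h1
  have em1 : ⟪x - x1, xk - x1⟫_ℝ = -⟪xk - x1, x1 - x⟫_ℝ := by
    rw [show x1 - x = -(x - x1) by abel, inner_neg_right, neg_neg, real_inner_comm]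
  have eAB : ⟪x - x1, Gy⟫_ℝ = ⟪Gy, x - y1⟫_ℝ + ⟪Gy, y1 - x1⟫_ℝ := by
    rw [← inner_add_right, real_inner_comm]
    congr 1
    abel
  rw [em1, eAB] at h1
  -- Projection inequality for y1
  have h2 := hy1proj x1 hx1
  rw [show (xk - γ • Gk) - y1 = (xk - y1) - γ • Gk by abel, inner_sub_right,
      real_inner_smul_right] at h2
  have em2 : ⟪x1 - y1, xk - y1⟫_ℝ = -⟪xk - y1, y1 - x1⟫_ℝ := by
    rw [show y1 - x1 = -(x1 - y1) by abel, inner_neg_right, neg_neg, real_inner_comm]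
  have eC : ⟪x1 - y1, Gk⟫_ℝ = -⟪Gk, y1 - x1⟫_ℝ := by
    rw [show x1 - y1 = -(y1 - x1) by abel, inner_neg_left, real_inner_comm]
  rw [em2, eC] at h2
  -- Monotonicity of G = F + η H
  have hm0 : (0:ℝ) ≤ ⟪Gx - Gy, x - y1⟫_ℝ := by
    have key : Gx - Gy = (F x - F y1) + η • (H x - H y1) := by
      rw [hGx, hGy]; module
    rw [key, inner_add_left, real_inner_smul_left]
    have h1' := hFmono x hx y1 hy1
    have h2' := hHmono x hx y1 hy1
    have := mul_nonneg hη.le h2'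
    linarith
  rw [inner_sub_left] at hm0
  have eD : ⟪Gx, x - y1⟫_ℝ = -⟪Gx, y1 - x⟫_ℝ := by
    rw [show x - y1 = -(y1 - x) by abel, inner_neg_right]
  rw [eD] at hm0
  have hm : 0 ≤ γ * (-⟪Gx, y1 - x⟫_ℝ - ⟪Gy, x - y1⟫_ℝ) := mul_nonneg hγ.le hm0
  -- Lipschitz / Cauchy-Schwarz estimate
  have eBC : ⟪Gy - Gk, y1 - x1⟫_ℝ = ⟪Gy, y1 - x1⟫_ℝ - ⟪Gk, y1 - x1⟫_ℝ :=
    inner_sub_left _ _ _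
  have hcs : ⟪Gy - Gk, y1 - x1⟫_ℝ ≤ ‖Gy - Gk‖ * ‖y1 - x1‖ := real_inner_le_norm _ _
  have hv : ‖Gy - Gk‖ ≤ ‖F y1 - F xk‖ + η * ‖H y1 - H xk‖ := by
    have key : Gy - Gk = (F y1 - F xk) + η • (H y1 - H xk) := by
      rw [hGy, hGk]; module
    rw [key]
    calc ‖(F y1 - F xk) + η • (H y1 - H xk)‖ ≤ ‖F y1 - F xk‖ + ‖η • (H y1 - H xk)‖ :=
          norm_add_le _ _
      _ = ‖F y1 - F xk‖ + η * ‖H y1 - H xk‖ := by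
          rw [norm_smul, Real.norm_eq_abs, abs_of_pos hη]
  have hf := hLF y1 hy1 xk hxk
  have hh := hLH y1 hy1 xk hxk
  have hD : γ * (⟪Gy, y1 - x1⟫_ℝ - ⟪Gk, y1 - x1⟫_ℝ) ≤
      (‖xk - y1‖^2 + ‖y1 - x1‖^2) / 2 := by
    rw [← eBC]
    set a : ℝ := ‖F y1 - F xk‖ with ha
    set b : ℝ := ‖H y1 - H xk‖ with hb
    set d : ℝ := ‖y1 - xk‖ with hd
    set w : ℝ := ‖y1 - x1‖ with hw
    set v : ℝ := ‖Gy - Gk‖ with hvv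
    have h0 : 0 ≤ d := norm_nonneg _
    have h0' : 0 ≤ w := norm_nonneg _
    have h0'' : 0 ≤ v := norm_nonneg _
    have hFn : 0 ≤ a := norm_nonneg _
    have hHn : 0 ≤ b := norm_nonneg _
    have hγv : γ * ⟪Gy - Gk, y1 - x1⟫_ℝ ≤ γ * (v * w) :=
      mul_le_mul_of_nonneg_left hcs hγ.le
    have hv2 : v^2 ≤ 2*(LF^2 + η^2*LH^2) * d^2 := by
      have h3 : v ≤ a + η * b := hv
      have h4 : a ≤ LF * d := hf
      have h5 : b ≤ LH * d := hh
      have h6 : 0 ≤ η * b := mul_nonneg hη.le hHn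
      have h7 : v^2 ≤ (a + η*b)^2 := by nlinarith
      have h8 : a^2 ≤ (LF*d)^2 := by nlinarith
      have h9 : b^2 ≤ (LH*d)^2 := by nlinarith
      nlinarith [sq_nonneg (a - η*b), sq_nonneg η, mul_le_mul_of_nonneg_left h9 (sq_nonneg η)]
    have hsq : γ^2 * v^2 ≤ d^2 := by
      have := mul_le_mul_of_nonneg_left hv2 (sq_nonneg γ)
      nlinarith [sq_nonneg d]
    have hdeq : d = ‖xk - y1‖ := norm_sub_rev _ _
    nlinarith [sq_nonneg (γ * v - w), mul_nonneg hγ.le h0'', hdeq, sq_nonneg d]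
  -- norm identities
  have nid1 : ‖xk - x‖^2 = ‖xk - x1‖^2 + 2*⟪xk - x1, x1 - x⟫_ℝ + ‖x1 - x‖^2 := by
    rw [show xk - x = (xk - x1) + (x1 - x) by abel]
    exact norm_add_sq_real _ _
  have nid2 : ‖xk - x1‖^2 = ‖xk - y1‖^2 + 2*⟪xk - y1, y1 - x1⟫_ℝ + ‖y1 - x1‖^2 := by
    rw [show xk - x1 = (xk - y1) + (y1 - x1) by abel]
    exact norm_add_sq_real _ _
  nlinarith [h1, h2, hm, hD, nid1, nid2]
end

section
/- Under the setting of the regularized extragradient step with H = ∇f where f is convex and L-smooth (F L_F-Lipschitz monotone on a closed convex set X, γ²(L_F² + η_k² L²) ≤ 1/2), the iterates y_{k+1} = Π_X[x_k − γ(F(x_k) + η_k ∇f(x_k))], x_{k+1} = Π_X[x_k − γ(F(y_{k+1}) + η_k ∇f(y_{k+1}))] satisfy, for every x ∈ X: 2γ F(x)ᵀ(y_{k+1} − x) + 2γ η_k (f(y_{k+1}) − f(x)) ≤ ‖x_k − x‖² − ‖x_{k+1} − x‖². -/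
local notation "⟪" x ", " y "⟫_ℝ" => @inner ℝ _ _ x y

open Metric Set

set_option maxHeartbeats 1000000 in
theorem stmt8 {n : ℕ}
    (X : Set (EuclideanSpace ℝ (Fin n))) (hXcl : IsClosed X) (hXconv : Convex ℝ X)
    (F : EuclideanSpace ℝ (Fin n) → EuclideanSpace ℝ (Fin n))
    (f : EuclideanSpace ℝ (Fin n) → ℝ)
    (f' : EuclideanSpace ℝ (Fin n) → EuclideanSpace ℝ (Fin n))
    (LF L γ η : ℝ)
    (hLF : ∀ u ∈ X, ∀ v ∈ X, ‖F u - F v‖ ≤ LF * ‖u - v‖)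
    (hFmono : ∀ u ∈ X, ∀ v ∈ X, 0 ≤ ⟪F u - F v, u - v⟫_ℝ)
    (hgrad : ∀ z, HasGradientAt f (f' z) z)
    (hsmooth : ∀ u v, ‖f' u - f' v‖ ≤ L * ‖u - v‖)
    (hconv : ∀ u v, f u + ⟪f' u, v - u⟫_ℝ ≤ f v)
    (hγ : 0 < γ) (hη : 0 < η)
    (hstep : γ^2 * (LF^2 + η^2*L^2) ≤ 1/2)
    (xk y1 x1 : EuclideanSpace ℝ (Fin n)) (hxk : xk ∈ X)
    (hy1 : y1 ∈ X)
    (hy1proj : ∀ z ∈ X, ⟪z - y1, (xk - γ • (F xk + η • f' xk)) - y1⟫_ℝ ≤ 0)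
    (hx1 : x1 ∈ X)
    (hx1proj : ∀ z ∈ X, ⟪z - x1, (xk - γ • (F y1 + η • f' y1)) - x1⟫_ℝ ≤ 0) :
    ∀ x ∈ X, 2*γ*⟪F x, y1 - x⟫_ℝ + 2*γ*η*(f y1 - f x) ≤ ‖xk - x‖^2 - ‖x1 - x‖^2 := by
  intro x hx
  set gk := F xk + η • f' xk with hgkdef
  set g1 := F y1 + η • f' y1 with hg1def
  clear_value gk g1
  have h1 := hx1proj x hx
  have h2 := hy1proj x1 hx1
  have e1 : (xk - γ • g1) - x1 = (xk - x1) - γ • g1 := by module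
  rw [e1, inner_sub_right, real_inner_smul_right] at h1
  have e2 : (xk - γ • gk) - y1 = (xk - y1) - γ • gk := by module
  rw [e2, inner_sub_right, real_inner_smul_right] at h2
  have hA : ‖xk - x‖^2 = ‖xk - x1‖^2 + 2 * ⟪xk - x1, x1 - x⟫_ℝ + ‖x1 - x‖^2 := by
    have hxx : xk - x = (xk - x1) + (x1 - x) := by module
    rw [hxx, @norm_add_sq_real]
  have hC : ‖xk - x1‖^2 = ‖xk - y1‖^2 - 2 * ⟪xk - y1, x1 - y1⟫_ℝ + ‖x1 - y1‖^2 := by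
    have hxx : xk - x1 = (xk - y1) - (x1 - y1) := by module
    rw [hxx, @norm_sub_sq_real]
  have hflip1 : ⟪x - x1, xk - x1⟫_ℝ = -⟪xk - x1, x1 - x⟫_ℝ := by
    rw [real_inner_comm]
    rw [show x - x1 = -(x1 - x) by module, inner_neg_right]
  have hflip2 : ⟪x - x1, g1⟫_ℝ = -⟪g1, x1 - x⟫_ℝ := by
    rw [real_inner_comm]
    rw [show x - x1 = -(x1 - x) by module, inner_neg_right]
  have key1 : γ * ⟪g1, x1 - x⟫_ℝ ≤ ⟪xk - x1, x1 - x⟫_ℝ := by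
    rw [hflip1, hflip2] at h1; linarith
  have key2 : ⟪x1 - y1, xk - y1⟫_ℝ ≤ γ * ⟪gk, x1 - y1⟫_ℝ := by
    have hc : ⟪x1 - y1, gk⟫_ℝ = ⟪gk, x1 - y1⟫_ℝ := real_inner_comm _ _
    have hc2 : γ * ⟪x1 - y1, gk⟫_ℝ = γ * ⟪gk, x1 - y1⟫_ℝ := by rw [hc]
    linarith
  have hcomm1 : ⟪x1 - y1, xk - y1⟫_ℝ = ⟪xk - y1, x1 - y1⟫_ℝ := real_inner_comm _ _
  have dec1 : ⟪g1, x1 - x⟫_ℝ = ⟪g1, y1 - x⟫_ℝ + ⟪g1, x1 - y1⟫_ℝ := by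
    rw [← inner_add_right]
    congr 1
    module
  have dec2 : ⟪g1, x1 - y1⟫_ℝ = ⟪gk, x1 - y1⟫_ℝ + ⟪g1 - gk, x1 - y1⟫_ℝ := by
    rw [← inner_add_left]
    congr 1
    module
  have d1 : γ * ⟪g1, x1 - x⟫_ℝ = γ * ⟪g1, y1 - x⟫_ℝ + γ * ⟪gk, x1 - y1⟫_ℝ
      + γ * ⟪g1 - gk, x1 - y1⟫_ℝ := by rw [dec1, dec2]; ring
  -- Cauchy-Schwarz
  have cs : -(‖g1 - gk‖ * ‖x1 - y1‖) ≤ ⟪g1 - gk, x1 - y1⟫_ℝ := by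
    have h := abs_real_inner_le_norm (g1 - gk) (x1 - y1)
    have := neg_abs_le (⟪g1 - gk, x1 - y1⟫_ℝ)
    linarith
  have cs1 : 2*γ*(-(‖g1 - gk‖ * ‖x1 - y1‖)) ≤ 2*γ*⟪g1 - gk, x1 - y1⟫_ℝ :=
    mul_le_mul_of_nonneg_left cs (by positivity)
  have cs2 : -(γ^2 * ‖g1 - gk‖^2 + ‖x1 - y1‖^2) ≤ 2*γ*⟪g1 - gk, x1 - y1⟫_ℝ := by
    nlinarith [cs1, sq_nonneg (γ * ‖g1 - gk‖ - ‖x1 - y1‖)]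
  -- Lipschitz bound
  have hdiff : g1 - gk = (F y1 - F xk) + η • (f' y1 - f' xk) := by
    rw [hg1def, hgkdef]; module
  have hb1 := hLF y1 hy1 xk hxk
  have hb2 := hsmooth y1 xk
  have hnormg : ‖g1 - gk‖ ≤ (LF + η * L) * ‖y1 - xk‖ := by
    rw [hdiff]
    have h3 : ‖(F y1 - F xk) + η • (f' y1 - f' xk)‖ ≤ ‖F y1 - F xk‖ + ‖η • (f' y1 - f' xk)‖ :=
      norm_add_le _ _
    have h4 : ‖η • (f' y1 - f' xk)‖ = η * ‖f' y1 - f' xk‖ := by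
      rw [norm_smul, Real.norm_eq_abs, abs_of_pos hη]
    linarith [h3, h4.le, h4.ge, mul_le_mul_of_nonneg_left hb2 hη.le]
  have hE : ‖y1 - xk‖ = ‖xk - y1‖ := norm_sub_rev _ _
  have hsq : γ^2 * ‖g1 - gk‖^2 ≤ ‖xk - y1‖^2 := by
    have h0 : (0:ℝ) ≤ ‖g1 - gk‖ := norm_nonneg _
    have h5 : ‖g1 - gk‖^2 ≤ ((LF + η * L) * ‖y1 - xk‖)^2 := by nlinarith [hnormg]
    rw [hE] at h5
    have h6 := mul_le_mul_of_nonneg_left h5 (sq_nonneg γ)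
    have h7 : γ^2 * (LF + η*L)^2 ≤ 1 := by
      linarith [hstep, sq_nonneg (γ*(LF - η*L))]
    have h8 := mul_le_mul_of_nonneg_right h7 (sq_nonneg (‖xk - y1‖))
    nlinarith [h6, h8]
  -- lower bound on ⟪g1, y1 - x⟫
  have hg1e : ⟪g1, y1 - x⟫_ℝ = ⟪F y1, y1 - x⟫_ℝ + η * ⟪f' y1, y1 - x⟫_ℝ := by
    rw [hg1def, inner_add_left, real_inner_smul_left]
  have hm : 0 ≤ ⟪F y1, y1 - x⟫_ℝ - ⟪F x, y1 - x⟫_ℝ := by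
    have := hFmono y1 hy1 x hx
    rw [inner_sub_left] at this
    linarith
  have hcv := hconv y1 x
  have hcve : ⟪f' y1, x - y1⟫_ℝ = -⟪f' y1, y1 - x⟫_ℝ := by
    rw [show x - y1 = -(y1 - x) by module, inner_neg_right]
  have hlow : ⟪F x, y1 - x⟫_ℝ + η * (f y1 - f x) ≤ ⟪g1, y1 - x⟫_ℝ := by
    rw [hg1e]
    rw [hcve] at hcv
    nlinarith [mul_le_mul_of_nonneg_left (show f y1 - f x ≤ ⟪f' y1, y1 - x⟫_ℝ by linarith) hη.le]
  have k3 : γ * ⟪F x, y1 - x⟫_ℝ + γ * η * (f y1 - f x) ≤ γ * ⟪g1, y1 - x⟫_ℝ := by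
    nlinarith [mul_le_mul_of_nonneg_left hlow hγ.le]
  set r1 : ℝ := ⟪xk - x1, x1 - x⟫_ℝ
  set r2 : ℝ := ⟪g1, x1 - x⟫_ℝ
  set r3 : ℝ := ⟪g1, y1 - x⟫_ℝ
  set r4 : ℝ := ⟪gk, x1 - y1⟫_ℝ
  set r5 : ℝ := ⟪g1 - gk, x1 - y1⟫_ℝ
  set r6 : ℝ := ⟪x1 - y1, xk - y1⟫_ℝ
  set r7 : ℝ := ⟪xk - y1, x1 - y1⟫_ℝ
  set r8 : ℝ := ‖g1 - gk‖
  set r9 : ℝ := ‖x1 - y1‖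
  set r10 : ℝ := ‖xk - y1‖
  set r11 : ℝ := ‖xk - x‖
  set r12 : ℝ := ‖x1 - x‖
  set r13 : ℝ := ‖xk - x1‖
  set r14 : ℝ := ⟪F x, y1 - x⟫_ℝ
  linarith [hA, hC, key1, key2, hcomm1, d1, cs2, hsq, k3]
end

section
/- Let X ⊆ ℝⁿ be closed and convex, F : X → ℝⁿ be L_F-Lipschitz and monotone, H : X → ℝⁿ be L_H-Lipschitz and μ_H-strongly monotone, and γ, η_k > 0 satisfy γ²L_F² + γη_k μ_H + γ²η_k² L_H² ≤ 1/2. Then the iterates y_{k+1} = Π_X[x_k − γ(F(x_k) + η_k H(x_k))], x_{k+1} = Π_X[x_k − γ(F(y_{k+1}) + η_k H(y_{k+1}))] satisfy, for every x ∈ X: 2γ(F(x) + η_k H(x))ᵀ(y_{k+1} − x) ≤ (1 − γ η_k μ_H)‖x_k − x‖² − ‖x_{k+1} − x‖². -/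
local notation "⟪" x ", " y "⟫_ℝ" => @inner ℝ _ _ x y

open Metric Set

set_option maxHeartbeats 1000000 in
theorem stmt9 {n : ℕ}
    (X : Set (EuclideanSpace ℝ (Fin n))) (hXcl : IsClosed X) (hXconv : Convex ℝ X)
    (F H : EuclideanSpace ℝ (Fin n) → EuclideanSpace ℝ (Fin n))
    (LF LH μH γ η : ℝ)
    (hLF : ∀ u ∈ X, ∀ v ∈ X, ‖F u - F v‖ ≤ LF * ‖u - v‖)
    (hFmono : ∀ u ∈ X, ∀ v ∈ X, 0 ≤ ⟪F u - F v, u - v⟫_ℝ)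
    (hLH : ∀ u ∈ X, ∀ v ∈ X, ‖H u - H v‖ ≤ LH * ‖u - v‖)
    (hμH : 0 < μH)
    (hHsmono : ∀ u ∈ X, ∀ v ∈ X, μH * ‖u - v‖^2 ≤ ⟪H u - H v, u - v⟫_ℝ)
    (hγ : 0 < γ) (hη : 0 < η)
    (hstep : γ^2*LF^2 + γ*η*μH + γ^2*η^2*LH^2 ≤ 1/2)
    (xk y1 x1 : EuclideanSpace ℝ (Fin n)) (hxk : xk ∈ X)
    (hy1 : y1 ∈ X)
    (hy1proj : ∀ z ∈ X, ⟪z - y1, (xk - γ • (F xk + η • H xk)) - y1⟫_ℝ ≤ 0)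
    (hx1 : x1 ∈ X)
    (hx1proj : ∀ z ∈ X, ⟪z - x1, (xk - γ • (F y1 + η • H y1)) - x1⟫_ℝ ≤ 0) :
    ∀ x ∈ X, 2*γ*⟪F x + η • H x, y1 - x⟫_ℝ
        ≤ (1 - γ*η*μH) * ‖xk - x‖^2 - ‖x1 - x‖^2 := by
  intro x hx
  set A := F xk + η • H xk with hAdef
  set B := F y1 + η • H y1 with hBdef
  set C := F x + η • H x with hCdef
  -- projection inequality for y1, tested at x1
  have hA : γ * ⟪A, y1 - x1⟫_ℝ ≤ ⟪xk - y1, y1 - x1⟫_ℝ := by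
    have h1 := hy1proj x1 hx1
    rw [sub_right_comm, inner_sub_right, real_inner_smul_right] at h1
    have e2 : (⟪x1 - y1, xk - y1⟫_ℝ) = -⟪xk - y1, y1 - x1⟫_ℝ := by
      rw [real_inner_comm, show x1 - y1 = -(y1 - x1) by abel, inner_neg_right]
    have e3 : (⟪x1 - y1, A⟫_ℝ) = -⟪A, y1 - x1⟫_ℝ := by
      rw [real_inner_comm, show x1 - y1 = -(y1 - x1) by abel, inner_neg_right]
    rw [e2, e3] at h1
    linarith
  -- projection inequality for x1, tested at x
  have hB : γ * ⟪B, x1 - x⟫_ℝ ≤ ⟪xk - x1, x1 - x⟫_ℝ := by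
    have h2 := hx1proj x hx
    rw [sub_right_comm, inner_sub_right, real_inner_smul_right] at h2
    have e2 : (⟪x - x1, xk - x1⟫_ℝ) = -⟪xk - x1, x1 - x⟫_ℝ := by
      rw [real_inner_comm, show x - x1 = -(x1 - x) by abel, inner_neg_right]
    have e3 : (⟪x - x1, B⟫_ℝ) = -⟪B, x1 - x⟫_ℝ := by
      rw [real_inner_comm, show x - x1 = -(x1 - x) by abel, inner_neg_right]
    rw [e2, e3] at h2
    linarith
  -- polarization identities
  have pol1 : 2 * ⟪xk - x1, x1 - x⟫_ℝ = ‖xk - x‖^2 - ‖xk - x1‖^2 - ‖x1 - x‖^2 := by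
    have h := norm_add_sq_real (xk - x1) (x1 - x)
    rw [show (xk - x1) + (x1 - x) = xk - x by abel] at h
    linarith
  have pol2 : 2 * ⟪xk - y1, y1 - x1⟫_ℝ = ‖xk - x1‖^2 - ‖xk - y1‖^2 - ‖y1 - x1‖^2 := by
    have h := norm_add_sq_real (xk - y1) (y1 - x1)
    rw [show (xk - y1) + (y1 - x1) = xk - x1 by abel] at h
    linarith
  -- Cauchy-Schwarz / Young
  have hCS : 2*γ*⟪B - A, y1 - x1⟫_ℝ ≤ γ^2 * ‖B - A‖^2 + ‖y1 - x1‖^2 := by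
    have h1 := real_inner_le_norm (B - A) (y1 - x1)
    nlinarith [mul_le_mul_of_nonneg_left h1 (by positivity : (0:ℝ) ≤ 2*γ),
      sq_nonneg (γ * ‖B - A‖ - ‖y1 - x1‖)]
  -- Lipschitz bound on B - A
  have hBA : ‖B - A‖ ≤ (LF + η * LH) * ‖xk - y1‖ := by
    have e : B - A = (F y1 - F xk) + η • (H y1 - H xk) := by
      rw [hBdef, hAdef, smul_sub]; abel
    calc ‖B - A‖ ≤ ‖F y1 - F xk‖ + ‖η • (H y1 - H xk)‖ := by rw [e]; exact norm_add_le _ _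
      _ = ‖F y1 - F xk‖ + η * ‖H y1 - H xk‖ := by
          rw [norm_smul, Real.norm_eq_abs, abs_of_pos hη]
      _ ≤ LF * ‖y1 - xk‖ + η * (LH * ‖y1 - xk‖) :=
          add_le_add (hLF y1 hy1 xk hxk) (mul_le_mul_of_nonneg_left (hLH y1 hy1 xk hxk) hη.le)
      _ = (LF + η*LH) * ‖xk - y1‖ := by rw [norm_sub_rev]; ring
  have hBA2 : γ^2 * ‖B - A‖^2 ≤ (2*γ^2*LF^2 + 2*γ^2*η^2*LH^2) * ‖xk - y1‖^2 := by
    have h0 := norm_nonneg (B - A)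
    have h1 : ‖B - A‖^2 ≤ (2*LF^2 + 2*η^2*LH^2) * ‖xk - y1‖^2 := by
      nlinarith [mul_self_le_mul_self h0 hBA, sq_nonneg ((LF - η*LH) * ‖xk - y1‖)]
    have h2 := mul_le_mul_of_nonneg_left h1 (sq_nonneg γ)
    ring_nf at h2 ⊢
    linarith
  -- monotonicity
  have hmono : ⟪C, y1 - x⟫_ℝ + η * μH * ‖y1 - x‖^2 ≤ ⟪B, y1 - x⟫_ℝ := by
    have h1 := hFmono y1 hy1 x hx
    have h2 := hHsmono y1 hy1 x hx
    have e : ⟪B, y1 - x⟫_ℝ - ⟪C, y1 - x⟫_ℝ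
        = ⟪F y1 - F x, y1 - x⟫_ℝ + η * ⟪H y1 - H x, y1 - x⟫_ℝ := by
      rw [hBdef, hCdef]
      simp only [inner_sub_left, inner_add_left, real_inner_smul_left]
      ring
    have h3 := mul_le_mul_of_nonneg_left h2 hη.le
    linarith [e, h1, h3]
  have hsplit : ⟪B, y1 - x⟫_ℝ = ⟪B, x1 - x⟫_ℝ + ⟪B, y1 - x1⟫_ℝ := by
    rw [← inner_add_right]; congr 1; abel
  have hsplit2 : ⟪B, y1 - x1⟫_ℝ = ⟪A, y1 - x1⟫_ℝ + ⟪B - A, y1 - x1⟫_ℝ := by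
    rw [inner_sub_left]; ring
  have key : γ*⟪C, y1 - x⟫_ℝ + γ*η*μH*‖y1 - x‖^2
      ≤ γ*⟪B, x1 - x⟫_ℝ + γ*⟪A, y1 - x1⟫_ℝ + γ*⟪B - A, y1 - x1⟫_ℝ := by
    have h := mul_le_mul_of_nonneg_left hmono hγ.le
    rw [hsplit, hsplit2] at h
    ring_nf at h ⊢
    linarith
  -- triangle inequality squared
  have htri : γ*η*μH*‖xk - x‖^2 ≤ 2*γ*η*μH*‖xk - y1‖^2 + 2*γ*η*μH*‖y1 - x‖^2 := by
    have h := norm_add_le (xk - y1) (y1 - x)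
    rw [show (xk - y1) + (y1 - x) = xk - x by abel] at h
    have hpos : 0 < γ*η*μH := by positivity
    nlinarith [norm_nonneg (xk - y1), norm_nonneg (y1 - x), norm_nonneg (xk - x),
      sq_nonneg (‖xk - y1‖ - ‖y1 - x‖), mul_self_le_mul_self (norm_nonneg (xk - x)) h]
  have hstep' : (2*γ^2*LF^2 + 2*γ^2*η^2*LH^2) * ‖xk - y1‖^2
      ≤ (1 - 2*γ*η*μH) * ‖xk - y1‖^2 := by
    nlinarith [sq_nonneg ‖xk - y1‖]
  linarith [hA, hB, hCS, hBA2, pol1, pol2, key, htri, hstep']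
end

section
/- Let X*_F ⊆ X ⊆ ℝⁿ be nonempty closed convex sets with X bounded. Let F be monotone on X with SOL(X,F) = X*_F, α-weakly sharp of order 1 (i.e., F(x*)ᵀ(x − x*) ≥ α·dist(x, X*_F) for all x ∈ X, x* ∈ X*_F), and let H be monotone on X. Let x* solve VI(X*_F, H), and suppose a constant η satisfies 0 < η ≤ α/(2‖H(x*)‖). If a sequence ȳ_K ∈ X satisfies 2γ(F(x*) + η H(x*))ᵀ(ȳ_K − x*) ≤ ‖x_0 − x*‖²/K for all K ≥ 1, then dist(ȳ_K, X*_F) ≤ ‖x_0 − x*‖²/(γ α K). -/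
local notation "⟪" x ", " y "⟫_ℝ" => @inner ℝ _ _ x y

open Metric Set

theorem stmt15 {n : ℕ}
    (X XF : Set (EuclideanSpace ℝ (Fin n)))
    (hXne : X.Nonempty) (hXcl : IsClosed X) (hXconv : Convex ℝ X)
    (hXbdd : Bornology.IsBounded X)
    (hXFne : XF.Nonempty) (hXFcl : IsClosed XF) (hXFconv : Convex ℝ XF)
    (hsub : XF ⊆ X)
    (F H : EuclideanSpace ℝ (Fin n) → EuclideanSpace ℝ (Fin n))
    (hFmono : ∀ u ∈ X, ∀ v ∈ X, 0 ≤ ⟪F u - F v, u - v⟫_ℝ)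
    (hHmono : ∀ u ∈ X, ∀ v ∈ X, 0 ≤ ⟪H u - H v, u - v⟫_ℝ)
    (hSOL : XF = {z ∈ X | ∀ y ∈ X, 0 ≤ ⟪F z, y - z⟫_ℝ})
    (α γ η : ℝ) (hα : 0 < α) (hγ : 0 < γ)
    (hws : ∀ x ∈ X, ∀ xs ∈ XF, α * infDist x XF ≤ ⟪F xs, x - xs⟫_ℝ)
    (xstar : EuclideanSpace ℝ (Fin n))
    (hxstar : xstar ∈ XF ∧ ∀ y ∈ XF, 0 ≤ ⟪H xstar, y - xstar⟫_ℝ)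
    (hη : 0 < η ∧ η ≤ α / (2 * ‖H xstar‖))
    (x0 : EuclideanSpace ℝ (Fin n))
    (ybar : ℕ → EuclideanSpace ℝ (Fin n)) (hybarX : ∀ K, ybar K ∈ X)
    (hineq : ∀ K : ℕ, 1 ≤ K →
      2*γ*⟪F xstar + η • H xstar, ybar K - xstar⟫_ℝ ≤ ‖x0 - xstar‖^2 / K) :
    ∀ K : ℕ, 1 ≤ K → infDist (ybar K) XF ≤ ‖x0 - xstar‖^2 / (γ * α * K) := by
  intro K hK
  obtain ⟨hxs, hVI⟩ := hxstar
  obtain ⟨hη0, hη2⟩ := hη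
  set d := infDist (ybar K) XF with hd
  -- projection
  obtain ⟨p, hpXF, hpd⟩ := hXFcl.exists_infDist_eq_dist hXFne (ybar K)
  have hF : α * d ≤ ⟪F xstar, ybar K - xstar⟫_ℝ := hws (ybar K) (hybarX K) xstar hxs
  have hH : -(‖H xstar‖ * d) ≤ ⟪H xstar, ybar K - xstar⟫_ℝ := by
    have h1 : (0:ℝ) ≤ ⟪H xstar, p - xstar⟫_ℝ := hVI p hpXF
    have h2 : -(‖H xstar‖ * d) ≤ ⟪H xstar, ybar K - p⟫_ℝ := by
      have := abs_real_inner_le_norm (H xstar) (ybar K - p)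
      have hn : ‖ybar K - p‖ = d := by
        rw [hd, hpd, dist_eq_norm]
      rw [hn] at this
      linarith [neg_abs_le (⟪H xstar, ybar K - p⟫_ℝ)]
    have h3 : ⟪H xstar, ybar K - xstar⟫_ℝ = ⟪H xstar, ybar K - p⟫_ℝ + ⟪H xstar, p - xstar⟫_ℝ := by
      rw [← inner_add_right]
      congr 1
      abel
    linarith
  have hηH : η * ‖H xstar‖ ≤ α / 2 := by
    rcases eq_or_lt_of_le (norm_nonneg (H xstar)) with h0 | h0
    · rw [← h0, mul_zero]; positivity
    · rw [div_mul_eq_div_div] at hη2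
      calc η * ‖H xstar‖ ≤ (α / 2 / ‖H xstar‖) * ‖H xstar‖ := by
            exact mul_le_mul_of_nonneg_right hη2 (le_of_lt h0)
        _ = α / 2 := div_mul_cancel₀ _ (ne_of_gt h0)
  have hd0 : 0 ≤ d := infDist_nonneg
  have key : 2 * γ * (α / 2 * d) ≤ ‖x0 - xstar‖ ^ 2 / K := by
    refine le_trans ?_ (hineq K hK)
    have hin : α / 2 * d ≤ ⟪F xstar + η • H xstar, ybar K - xstar⟫_ℝ := by
      rw [inner_add_left, real_inner_smul_left]
      nlinarith [mul_le_mul_of_nonneg_left hH (le_of_lt hη0)]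
    nlinarith
  have hK0 : (0:ℝ) < K := by exact_mod_cast hK
  have : d ≤ ‖x0 - xstar‖ ^ 2 / (γ * α * K) := by
    rw [le_div_iff₀ (by positivity)]
    calc d * (γ * α * K) = (2 * γ * (α / 2 * d)) * K := by ring
      _ ≤ (‖x0 - xstar‖ ^ 2 / K) * K := by
          exact mul_le_mul_of_nonneg_right key (le_of_lt hK0)
      _ = ‖x0 - xstar‖ ^ 2 := by field_simp
  exact this
end

section
/- Let f : ℝⁿ → ℝ be L-smooth, C_f ≥ sup_x ‖∇f(x)‖ over the relevant set, and 0 < γ̂ ≤ 1/(2L). Suppose vectors x̂_k, x̂_{k+1}, δ_k, e_k satisfy ((x̂_{k+1} − δ_k) − (x̂_k − e_k))ᵀ(z_k − (x̂_{k+1} − δ_k)) ≥ 0 with z_k = x̂_k − γ̂∇f(x̂_k). Then the residual G_{1/γ̂}(x̂_k) := (1/γ̂)(x̂_k − (x̂_{k+1} − δ_k)) satisfies ‖G_{1/γ̂}(x̂_k)‖² ≤ (4/γ̂)(f(x̂_k) − f(x̂_{k+1})) + Lγ̂ C_f² + (80/(Lγ̂³))(‖δ_k‖² + ‖e_k‖²).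 -/
/-! Expanding the variational inequality with `w = x̂ₖ - (x̂ₖ₊₁ - δₖ)` gives
`‖w‖² ≤ ⟪eₖ, w - γ∇f(x̂ₖ)⟫ + γ⟪∇f(x̂ₖ), w⟫`. The first term is at most `‖eₖ‖(‖w‖ + γC_f)` by
Cauchy–Schwarz; the second is bounded by the descent lemma for the `L`-smooth `f` along
`x̂ₖ₊₁ - x̂ₖ = δₖ - w`. This leaves a scalar quadratic inequality in `‖w‖`, which, since
`Lγ ≤ 1/2`, is resolved by AM–GM into the stated bound for `‖w‖² / γ²`. -/

local notation "⟪" x ", " y "⟫_ℝ" => @inner ℝ _ _ x y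

section InnerProductSpace

variable {E : Type*} [NormedAddCommGroup E] [InnerProductSpace ℝ E]

theorem HasGradientAt.hasDerivAt_add_smul [CompleteSpace E] {f : E → ℝ} {g u d : E} {t : ℝ}
    (hf : HasGradientAt f g (u + t • d)) :
    HasDerivAt (fun s : ℝ => f (u + s • d)) ⟪g, d⟫_ℝ t := by
  have hline : HasDerivAt (fun s : ℝ => u + s • d) d t := by
    simpa using ((hasDerivAt_id t).smul_const d).const_add u
  exact hf.hasFDerivAt.comp_hasDerivAt t hline

theorem le_add_inner_add_of_lipschitz_gradient [CompleteSpace E] {f : E → ℝ} {f' : E → E} {L : ℝ}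
    (hgrad : ∀ z, HasGradientAt f (f' z) z) (hsmooth : ∀ u v, ‖f' u - f' v‖ ≤ L * ‖u - v‖)
    (u v : E) :
    f v ≤ f u + ⟪f' u, v - u⟫_ℝ + L / 2 * ‖v - u‖ ^ 2 := by
  set d := v - u
  have hderiv (t : ℝ) := (hgrad (u + t • d)).hasDerivAt_add_smul
  have hbound : ∀ t ∈ Set.Ico (0 : ℝ) 1,
      ⟪f' (u + t • d), d⟫_ℝ ≤ ⟪f' u, d⟫_ℝ + L * t * ‖d‖ ^ 2 := by
    intro t ⟨ht, _⟩
    have hlip : ‖f' (u + t • d) - f' u‖ ≤ L * t * ‖d‖ := by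
      simpa [norm_smul, abs_of_nonneg ht, mul_assoc] using hsmooth (u + t • d) u
    calc ⟪f' (u + t • d), d⟫_ℝ = ⟪f' u, d⟫_ℝ + ⟪f' (u + t • d) - f' u, d⟫_ℝ := by
          rw [inner_sub_left]; ring
      _ ≤ ⟪f' u, d⟫_ℝ + ‖f' (u + t • d) - f' u‖ * ‖d‖ := by gcongr; exact real_inner_le_norm _ _
      _ ≤ ⟪f' u, d⟫_ℝ + L * t * ‖d‖ ^ 2 := by nlinarith [norm_nonneg d]
  have hquad (t : ℝ) : HasDerivAt (fun s : ℝ => f u + s * ⟪f' u, d⟫_ℝ + L / 2 * s ^ 2 * ‖d‖ ^ 2)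
      (⟪f' u, d⟫_ℝ + L * t * ‖d‖ ^ 2) t := by
    have h := (((hasDerivAt_id' t).mul_const ⟪f' u, d⟫_ℝ).const_add (f u)).add
      (((hasDerivAt_pow 2 t).const_mul (L / 2)).mul_const (‖d‖ ^ 2))
    exact h.congr_deriv (by ring)
  have key := image_le_of_deriv_right_le_deriv_boundary
    (fun t _ => (hderiv t).continuousAt.continuousWithinAt)
    (fun t _ => (hderiv t).hasDerivWithinAt) (by simp)
    (fun t _ => (hquad t).continuousAt.continuousWithinAt)
    (fun t _ => (hquad t).hasDerivWithinAt) hbound (Set.right_mem_Icc.2 zero_le_one)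
  simpa [d] using key

theorem norm_sq_le_of_inner_step_nonneg {f : E → ℝ} {g xk x1 δ e : E} {L γ Cf : ℝ} (hL : 0 ≤ L)
    (hγ : 0 ≤ γ) (hg : ‖g‖ ≤ Cf)
    (hdesc : f x1 ≤ f xk + ⟪g, x1 - xk⟫_ℝ + L / 2 * ‖x1 - xk‖ ^ 2)
    (hproj : 0 ≤ ⟪(x1 - δ) - (xk - e), (xk - γ • g) - (x1 - δ)⟫_ℝ) :
    ‖xk - (x1 - δ)‖ ^ 2 ≤ ‖e‖ * (‖xk - (x1 - δ)‖ + γ * Cf)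
      + γ * (f xk - f x1 + Cf * ‖δ‖ + L / 2 * (‖xk - (x1 - δ)‖ + ‖δ‖) ^ 2) := by
  set w := xk - (x1 - δ)
  have hproj' : 0 ≤ ⟪e - w, w - γ • g⟫_ℝ := by
    convert hproj using 2 <;> simp only [w] <;> abel
  have hsplit : ‖w‖ ^ 2 ≤ ⟪e, w - γ • g⟫_ℝ + γ * ⟪g, w⟫_ℝ := by
    rw [← real_inner_self_eq_norm_sq, real_inner_comm w g]
    simp only [inner_sub_left, inner_sub_right, real_inner_smul_right] at hproj' ⊢
    linarith
  have herr : ⟪e, w - γ • g⟫_ℝ ≤ ‖e‖ * (‖w‖ + γ * Cf) := by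
    calc ⟪e, w - γ • g⟫_ℝ ≤ ‖e‖ * ‖w - γ • g‖ := real_inner_le_norm _ _
      _ ≤ ‖e‖ * (‖w‖ + γ * Cf) := by
        gcongr
        calc ‖w - γ • g‖ ≤ ‖w‖ + γ * ‖g‖ := by
              simpa [norm_smul, abs_of_nonneg hγ] using norm_sub_le w (γ • g)
          _ ≤ ‖w‖ + γ * Cf := by gcongr
  have hx1 : x1 - xk = δ - w := by simp only [w]; abel
  have hdec : ⟪g, w⟫_ℝ ≤ f xk - f x1 + Cf * ‖δ‖ + L / 2 * (‖w‖ + ‖δ‖) ^ 2 := by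
    have hδ : ⟪g, δ⟫_ℝ ≤ Cf * ‖δ‖ :=
      (real_inner_le_norm g δ).trans (by gcongr)
    have hstep : L / 2 * ‖δ - w‖ ^ 2 ≤ L / 2 * (‖w‖ + ‖δ‖) ^ 2 := by
      gcongr
      exact (norm_sub_le δ w).trans_eq (add_comm _ _)
    rw [hx1, inner_sub_right] at hdesc
    linarith
  linarith [mul_le_mul_of_nonneg_left hdec hγ]

end InnerProductSpace

theorem div_sq_le_of_sq_le_quadratic {L γ a b c C D : ℝ} (hL : 0 < L) (hγ : 0 < γ)
    (hLγ : L * γ ≤ 1 / 2)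
    (h : a ^ 2 ≤ c * (a + γ * C) + γ * (D + C * b + L / 2 * (a + b) ^ 2)) :
    a ^ 2 / γ ^ 2 ≤ 4 / γ * D + L * γ * C ^ 2 + 80 / (L * γ ^ 3) * (b ^ 2 + c ^ 2) := by
  have hs : 0 < L * γ := by positivity
  have h1 : a ^ 2 ≤ 4 * γ * D + 4 * c ^ 2 + 4 * γ * C * (b + c) + 4 * L * γ * b ^ 2 := by
    nlinarith [sq_nonneg (a - 2 * c), sq_nonneg (a - b), mul_nonneg hs.le (sq_nonneg (a - b))]
  have h2 : L * γ * a ^ 2 ≤ 4 * L * γ ^ 2 * D + L ^ 2 * γ ^ 4 * C ^ 2 + 80 * (b ^ 2 + c ^ 2) := by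
    nlinarith [mul_le_mul_of_nonneg_left h1 hs.le, sq_nonneg (L * γ ^ 2 * C - 4 * b),
      sq_nonneg (L * γ ^ 2 * C - 4 * c), mul_le_mul_of_nonneg_right hLγ (sq_nonneg c),
      mul_le_mul_of_nonneg_right (mul_le_mul hLγ hLγ hs.le (by norm_num)) (sq_nonneg b)]
  rw [div_le_iff₀ (by positivity), ← mul_le_mul_iff_of_pos_left hs]
  calc L * γ * a ^ 2
      ≤ 4 * L * γ ^ 2 * D + L ^ 2 * γ ^ 4 * C ^ 2 + 80 * (b ^ 2 + c ^ 2) := h2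
    _ = L * γ * ((4 / γ * D + L * γ * C ^ 2 + 80 / (L * γ ^ 3) * (b ^ 2 + c ^ 2)) * γ ^ 2) := by
      field_simp

theorem stmt16 {n : ℕ}
    (f : EuclideanSpace ℝ (Fin n) → ℝ)
    (f' : EuclideanSpace ℝ (Fin n) → EuclideanSpace ℝ (Fin n))
    (L Cf γ : ℝ) (hL : 0 < L)
    (hgrad : ∀ z, HasGradientAt f (f' z) z)
    (hsmooth : ∀ u v, ‖f' u - f' v‖ ≤ L * ‖u - v‖)
    (hγ : 0 < γ) (hγle : γ ≤ 1/(2*L))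
    (xk x1 δ e : EuclideanSpace ℝ (Fin n))
    (hCf : ‖f' xk‖ ≤ Cf)
    (hproj : 0 ≤ ⟪(x1 - δ) - (xk - e), (xk - γ • f' xk) - (x1 - δ)⟫_ℝ) :
    ‖(1/γ) • (xk - (x1 - δ))‖^2
      ≤ 4/γ * (f xk - f x1) + L*γ*Cf^2 + 80/(L*γ^3) * (‖δ‖^2 + ‖e‖^2) := by
  have hLγ : L * γ ≤ 1 / 2 := by
    rw [le_div_iff₀ (by positivity)] at hγle
    linarith
  have hstep := norm_sq_le_of_inner_step_nonneg hL.le hγ.le hCf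
    (le_add_inner_add_of_lipschitz_gradient hgrad hsmooth xk x1) hproj
  rw [norm_smul, mul_pow, Real.norm_eq_abs, abs_of_pos (one_div_pos.2 hγ), one_div_pow,
    one_div_mul_eq_div]
  exact div_sq_le_of_sq_le_quadratic hL hγ hLγ hstep
end
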